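/- arXiv:1905.10214 — 2 statements merged into one kernel-verified Lean document; each statement's English description precedes it below -/
import Mathlib

section
/- Let p be prime, n ∈ ℕ, and let s, t, x, y ∈ (ℤ/p)ⁿ, γ ∈ ℤ/p, W ∈ GL₂(ℤ/p). Define aᵢ = (W⁻¹)ᵀ·(xᵢ, γ·sᵢ)ᵀ and bⱼ = W·(yⱼ, −tⱼ)ᵀ for all i, j ∈ [n]. Then for any coefficients q_{i,j} ∈ ℤ/p, we have γ·q(s,t) + ∑_{i,j} q_{i,j}·(aᵢ · bⱼ) = q(x,y), where q(u,v) = ∑_{i,j} q_{i,j}·uᵢ·vⱼ. -/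
open Matrix

theorem stmt_1 (p : ℕ) [Fact p.Prime] (n : ℕ)
    (s t x y : Fin n → ZMod p) (γ : ZMod p)
    (W : Matrix (Fin 2) (Fin 2) (ZMod p)) (hW : IsUnit W.det)
    (a b : Fin n → Fin 2 → ZMod p)
    (ha : ∀ i, a i = (W⁻¹)ᵀ *ᵥ ![x i, γ * s i])
    (hb : ∀ j, b j = W *ᵥ ![y j, -(t j)])
    (q : Fin n → Fin n → ZMod p) :
    γ * (∑ i, ∑ j, q i j * s i * t j) + ∑ i, ∑ j, q i j * (a i ⬝ᵥ b j)
      = ∑ i, ∑ j, q i j * x i * y j := by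
  have key : ∀ i j, a i ⬝ᵥ b j = x i * y j - γ * s i * t j := by
    intro i j
    rw [ha, hb, Matrix.mulVec_transpose, Matrix.dotProduct_mulVec,
      Matrix.vecMul_vecMul, Matrix.nonsing_inv_mul W hW, Matrix.vecMul_one]
    simp [dotProduct, Fin.sum_univ_two]
    ring
  simp only [key]
  rw [Finset.mul_sum]
  rw [← Finset.sum_add_distrib]
  congr 1; ext i
  rw [Finset.mul_sum, ← Finset.sum_add_distrib]
  congr 1; ext j
  ring
end

section
/- Let F be a field, n ≥ 1, and let e₁ map a pair (u, v) ∈ F² × F² to u · v (dot product). Suppose W ∈ GL₂(F), and define the 'encryption' of (x, y) ∈ Fⁿ × Fⁿ with secret (s, t) ∈ Fⁿ × Fⁿ and randomness γ ∈ F as (aᵢ)ᵢ, (bⱼ)ⱼ with aᵢ = (W⁻¹)ᵀ(xᵢ, γsᵢ)ᵀ, bⱼ = W(yⱼ, −tⱼ)ᵀ. Then the decryption equation holds for every quadratic form q simultaneously: the single ciphertext ((aᵢ), (bⱼ), γ) satisfies γ·q(s,t) + ∑_{i,j} q_{i,j}(aᵢ·bⱼ) = q(x,y) for all coefficient matrices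 (q_{i,j}) ∈ F^{n×n}. -/
open Matrix

theorem stmt_16 {F : Type*} [Field F] (n : ℕ) (hn : 1 ≤ n)
    (W : Matrix (Fin 2) (Fin 2) F) (hW : IsUnit W.det)
    (x y s t : Fin n → F) (γ : F)
    (a b : Fin n → Fin 2 → F)
    (ha : ∀ i, a i = (W⁻¹)ᵀ *ᵥ ![x i, γ * s i])
    (hb : ∀ j, b j = W *ᵥ ![y j, -(t j)]) :
    ∀ q : Fin n → Fin n → F,
      γ * (∑ i, ∑ j, q i j * s i * t j) + ∑ i, ∑ j, q i j * (a i ⬝ᵥ b j)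
        = ∑ i, ∑ j, q i j * x i * y j := by
  have key : ∀ i j, a i ⬝ᵥ b j = x i * y j - γ * s i * t j := by
    intro i j
    rw [ha, hb, mulVec_transpose, ← dotProduct_mulVec, mulVec_mulVec,
      Matrix.nonsing_inv_mul W hW, one_mulVec]
    simp [dotProduct, Fin.sum_univ_two]
    ring
  intro q
  rw [Finset.mul_sum, ← Finset.sum_add_distrib]
  refine Finset.sum_congr rfl fun i _ => ?_
  rw [Finset.mul_sum, ← Finset.sum_add_distrib]
  refine Finset.sum_congr rfl fun j _ => ?_
  rw [key]
  ring
end
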